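/- For every real number T, the integral ∫₀^∞ |e^{-irT} − 1|² e^{-2r} r^{-1} dr converges and equals log(1 + T²/4). -/

import Mathlib

/-!
Differentiate in `T` under the integral sign: the derivative of `2 - 2 cos (r T)` is
`2 r sin (r T)`, which cancels the singular factor `1 / r`, and the remaining Laplace transform
`∫₀^∞ sin (r T) e^{-a r} dr = T / (a² + T²)` is the imaginary part of
`∫₀^∞ e^{(-a + i T) r} dr = 1 / (a - i T)`. So both sides have derivative `2 T / (a² + T²)`
and vanish at `T = 0`.
-/

open MeasureTheory Set

lemma norm_exp_neg_mul_I_sub_one_sq (x : ℝ) :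
    ‖Complex.exp (-(Complex.I * x)) - 1‖ ^ 2 = 2 - 2 * Real.cos x := by
  have h : -(Complex.I * x) = ((-x : ℝ) : ℂ) * Complex.I := by push_cast; ring
  rw [h, Complex.sq_norm, Complex.normSq_apply]
  simp only [Complex.sub_re, Complex.sub_im, Complex.one_re, Complex.one_im,
    Complex.exp_ofReal_mul_I_re, Complex.exp_ofReal_mul_I_im, Real.cos_neg, Real.sin_neg]
  nlinarith [Real.sin_sq_add_cos_sq x]

lemma integral_sin_mul_exp_neg_mul {a : ℝ} (ha : 0 < a) (T : ℝ) :
    ∫ r in Ioi (0 : ℝ), Real.sin (r * T) * Real.exp (-(a * r)) = T / (a ^ 2 + T ^ 2) := by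
  set z : ℂ := -a + T * Complex.I
  have hz : z.re < 0 := by simpa [z]
  have him (r : ℝ) : (Complex.exp (z * r)).im = Real.sin (r * T) * Real.exp (-(a * r)) := by
    simp [z, Complex.exp_im]; ring_nf
  calc ∫ r in Ioi (0 : ℝ), Real.sin (r * T) * Real.exp (-(a * r))
      = (∫ r in Ioi (0 : ℝ), Complex.exp (z * r)).im := by
        simp_rw [← him]; exact integral_im (integrableOn_exp_mul_complex_Ioi hz 0)
    _ = T / (a ^ 2 + T ^ 2) := by
        rw [integral_exp_mul_complex_Ioi hz 0]
        simp [z, Complex.div_im, Complex.normSq_apply]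
        field_simp

lemma integrableOn_mul_exp_neg_mul {a : ℝ} (ha : 0 < a) :
    IntegrableOn (fun r : ℝ => r * Real.exp (-(a * r))) (Ioi 0) := by
  simpa using integrableOn_rpow_mul_exp_neg_mul_rpow (s := 1) (p := 1) (by norm_num) one_pos ha

noncomputable def cocycleIntegrand (a T r : ℝ) : ℝ :=
  (2 - 2 * Real.cos (r * T)) * Real.exp (-(a * r)) / r

lemma integrableOn_cocycleIntegrand {a : ℝ} (ha : 0 < a) (T : ℝ) :
    IntegrableOn (cocycleIntegrand a T) (Ioi 0) := by
  refine ((integrableOn_mul_exp_neg_mul ha).const_mul (T ^ 2)).mono'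
    (by unfold cocycleIntegrand; exact Measurable.aestronglyMeasurable (by fun_prop)) ?_
  filter_upwards [ae_restrict_mem measurableSet_Ioi] with r (hr : 0 < r)
  have h_one_sub_cos : 0 ≤ 2 - 2 * Real.cos (r * T) := by linarith [Real.cos_le_one (r * T)]
  have h_quadratic : 2 - 2 * Real.cos (r * T) ≤ (r * T) ^ 2 := by
    linarith [Real.one_sub_sq_div_two_le_cos (x := r * T)]
  rw [Real.norm_eq_abs, cocycleIntegrand, abs_of_nonneg (by positivity), div_le_iff₀ hr]
  calc (2 - 2 * Real.cos (r * T)) * Real.exp (-(a * r))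
      ≤ (r * T) ^ 2 * Real.exp (-(a * r)) := by gcongr
    _ = T ^ 2 * (r * Real.exp (-(a * r))) * r := by ring

lemma hasDerivAt_cocycleIntegrand (a r T : ℝ) :
    HasDerivAt (cocycleIntegrand a · r) (2 * Real.sin (r * T) * Real.exp (-(a * r))) T := by
  rcases eq_or_ne r 0 with rfl | hr
  · simpa [cocycleIntegrand] using hasDerivAt_const T (0 : ℝ)
  have h := ((((hasDerivAt_id T).const_mul r).cos.const_mul 2).const_sub 2).mul_const
    (Real.exp (-(a * r))) |>.div_const r
  refine h.congr_deriv ?_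
  simp only [id, mul_one]
  field_simp

lemma hasDerivAt_integral_cocycleIntegrand {a : ℝ} (ha : 0 < a) (T : ℝ) :
    HasDerivAt (fun T => ∫ r in Ioi (0 : ℝ), cocycleIntegrand a T r)
      (2 * T / (a ^ 2 + T ^ 2)) T := by
  have h := hasDerivAt_integral_of_dominated_loc_of_deriv_le (μ := volume.restrict (Ioi 0))
    (F' := fun T r => 2 * Real.sin (r * T) * Real.exp (-(a * r)))
    (bound := fun r => 2 * Real.exp (-(a * r))) (Metric.ball_mem_nhds T one_pos)
    (.of_forall fun T => (integrableOn_cocycleIntegrand ha T).aestronglyMeasurable)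
    (integrableOn_cocycleIntegrand ha T) (by fun_prop)
    (.of_forall fun r S _ => ?_)
    (by simpa [neg_mul] using (exp_neg_integrableOn_Ioi 0 ha).const_mul 2)
    (.of_forall fun r S _ => hasDerivAt_cocycleIntegrand a r S)
  · simpa [mul_assoc, integral_const_mul, integral_sin_mul_exp_neg_mul ha, mul_div_assoc]
      using h.2
  · rw [Real.norm_eq_abs, abs_mul, abs_mul, Real.abs_exp, abs_two]
    gcongr ?_ * _
    linarith [Real.abs_sin_le_one (r * S)]

lemma hasDerivAt_log_one_add_sq_div_sq {a : ℝ} (ha : a ≠ 0) (T : ℝ) :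
    HasDerivAt (fun T => Real.log (1 + T ^ 2 / a ^ 2)) (2 * T / (a ^ 2 + T ^ 2)) T := by
  have h := (((hasDerivAt_pow 2 T).div_const (a ^ 2)).const_add 1).log (by positivity)
  refine h.congr_deriv ?_
  field_simp
  ring

lemma integral_cocycleIntegrand {a : ℝ} (ha : 0 < a) (T : ℝ) :
    ∫ r in Ioi (0 : ℝ), cocycleIntegrand a T r = Real.log (1 + T ^ 2 / a ^ 2) := by
  have h_deriv (S : ℝ) := (hasDerivAt_integral_cocycleIntegrand ha S).sub
    (hasDerivAt_log_one_add_sq_div_sq ha.ne' S)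
  have h_const := is_const_of_deriv_eq_zero (fun S => (h_deriv S).differentiableAt)
    (fun S => by simpa using (h_deriv S).deriv) T 0
  simpa [cocycleIntegrand, sub_eq_zero] using h_const

theorem cocycle_norm_radial_integral (T : ℝ) :
    IntegrableOn
      (fun r : ℝ =>
        ‖Complex.exp (-(Complex.I * r * T)) - 1‖ ^ 2 * Real.exp (-(2 * r)) / r)
      (Ioi 0) volume ∧
    ∫ r in Ioi (0 : ℝ),
        ‖Complex.exp (-(Complex.I * r * T)) - 1‖ ^ 2 * Real.exp (-(2 * r)) / r
      = Real.log (1 + T ^ 2 / 4) := by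
  have h_integrand : (fun r : ℝ =>
      ‖Complex.exp (-(Complex.I * r * T)) - 1‖ ^ 2 * Real.exp (-(2 * r)) / r) =
      cocycleIntegrand 2 T := by
    ext r
    rw [cocycleIntegrand, ← norm_exp_neg_mul_I_sub_one_sq, Complex.ofReal_mul, mul_assoc]
  rw [h_integrand, integral_cocycleIntegrand two_pos]
  exact ⟨integrableOn_cocycleIntegrand two_pos T, by norm_num⟩
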